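/- arXiv:2004.04728 — 8 statements merged into one kernel-verified Lean document; each statement's English description precedes it below -/
import Mathlib

section
/- Let (X,d) be a Ptolemaic metric space and let U ⊆ X be an open set whose boundary ∂U is non-empty. Then the function ρ_U(x,y) = sup_{p∈∂U} log(1 + d(x,y)/(d(p,x)·d(p,y))), defined for x,y ∈ U, satisfies the strong hyperbolicity inequality with parameter ε = 1: for all x,y,z,t ∈ U, exp((1/2)ρ_U(x,y) + (1/2)ρ_U(z,t)) ≤ exp((1/2)ρ_U(x,z) + (1/2)ρ_U(y,t)) + exp((1/2)ρ_U(x,t) + (1/2)ρ_U(y,z)). -/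
set_option maxHeartbeats 1000000


noncomputable def rhoU {X : Type*} [MetricSpace X] (U : Set X) (x y : X) : ℝ :=
  sSup {r : ℝ | ∃ p ∈ frontier U, r = Real.log (1 + dist x y / (dist p x * dist p y))}

private lemma core_ineq (A B c d e f : ℝ) (hA0 : 0 ≤ A) (hB0 : 0 ≤ B)
    (hc : 0 ≤ c) (hd : 0 ≤ d) (he : 0 ≤ e) (hf : 0 ≤ f)
    (h1 : A ≤ c + f) (h2 : A ≤ e + d) (h3 : B ≤ c + e) (h4 : B ≤ f + d) :
    Real.sqrt ((1+A)*(1+B)) ≤ Real.sqrt ((1+c)*(1+d)) + Real.sqrt ((1+e)*(1+f)) := by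
  have hsc0 : 0 ≤ Real.sqrt c := Real.sqrt_nonneg c
  have hsd0 : 0 ≤ Real.sqrt d := Real.sqrt_nonneg d
  have hse0 : 0 ≤ Real.sqrt e := Real.sqrt_nonneg e
  have hsf0 : 0 ≤ Real.sqrt f := Real.sqrt_nonneg f
  have hsc : Real.sqrt c ^ 2 = c := Real.sq_sqrt hc
  have hsd : Real.sqrt d ^ 2 = d := Real.sq_sqrt hd
  have hse : Real.sqrt e ^ 2 = e := Real.sq_sqrt he
  have hsf : Real.sqrt f ^ 2 = f := Real.sq_sqrt hf
  set sc := Real.sqrt c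
  set sd := Real.sqrt d
  set se := Real.sqrt e
  set sf := Real.sqrt f
  set u := Real.sqrt ((1+c)*(1+d)) with hu
  set v := Real.sqrt ((1+e)*(1+f)) with hv
  have hu0 : 0 ≤ u := Real.sqrt_nonneg _
  have hv0 : 0 ≤ v := Real.sqrt_nonneg _
  have hu2 : u ^ 2 = (1+c)*(1+d) := Real.sq_sqrt (by positivity)
  have hv2 : v ^ 2 = (1+e)*(1+f) := Real.sq_sqrt (by positivity)
  have key1 : 1 + sc*sd ≤ u := by
    have h : (1 + sc*sd)^2 ≤ (1+c)*(1+d) := by nlinarith [sq_nonneg (sc - sd)]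
    calc 1 + sc*sd = Real.sqrt ((1 + sc*sd)^2) := (Real.sqrt_sq (by positivity)).symm
      _ ≤ u := Real.sqrt_le_sqrt h
  have key2 : 1 + se*sf ≤ v := by
    have h : (1 + se*sf)^2 ≤ (1+e)*(1+f) := by nlinarith [sq_nonneg (se - sf)]
    calc 1 + se*sf = Real.sqrt ((1 + se*sf)^2) := (Real.sqrt_sq (by positivity)).symm
      _ ≤ v := Real.sqrt_le_sqrt h
  have hK0 : 0 ≤ 2*(sc*sd)*(se*sf) := by positivity
  have hK2 : (2*(sc*sd)*(se*sf))^2 = 4*(c*d)*(e*f) := by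
    have : (2*(sc*sd)*(se*sf))^2 = 4*(sc^2*sd^2)*(se^2*sf^2) := by ring
    rw [this, hsc, hsd, hse, hsf]
  have prodAB : A*B ≤ c*d + e*f + 2*(sc*sd)*(se*sf) := by
    rcases le_total ((e-f)^2) ((c-d)^2) with hcase | hcase
    · by_cases hO1 : c*(c+e+f-d) ≤ 2*(sc*sd)*(se*sf)
      · have hab : A*B ≤ (c+f)*(c+e) := mul_le_mul h1 h3 hB0 (by linarith)
        nlinarith [hab, hO1]
      · push_neg at hO1
        have hprod : (c*(c+e+f-d))*(d*(d+e+f-c)) ≤ (2*(sc*sd)*(se*sf))^2 := by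
          have h4ef : (c+e+f-d)*(d+e+f-c) ≤ 4*(e*f) := by nlinarith [hcase]
          have h5 := mul_le_mul_of_nonneg_left h4ef (mul_nonneg hc hd)
          calc (c*(c+e+f-d))*(d*(d+e+f-c)) = (c*d)*((c+e+f-d)*(d+e+f-c)) := by ring
            _ ≤ (c*d)*(4*(e*f)) := h5
            _ = (2*(sc*sd)*(se*sf))^2 := by rw [hK2]; ring
        have hO4 : d*(d+e+f-c) ≤ 2*(sc*sd)*(se*sf) := by
          by_contra hcon
          push_neg at hcon
          nlinarith [mul_lt_mul'' hO1 hcon hK0 hK0]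
        have hab : A*B ≤ (e+d)*(f+d) := mul_le_mul h2 h4 hB0 (by linarith)
        nlinarith [hab, hO4]
    · by_cases hO2 : f*(c+f+d-e) ≤ 2*(sc*sd)*(se*sf)
      · have hab : A*B ≤ (c+f)*(f+d) := mul_le_mul h1 h4 hB0 (by linarith)
        nlinarith [hab, hO2]
      · push_neg at hO2
        have hprod : (f*(c+f+d-e))*(e*(c+e+d-f)) ≤ (2*(sc*sd)*(se*sf))^2 := by
          have h4cd : (c+f+d-e)*(c+e+d-f) ≤ 4*(c*d) := by nlinarith [hcase]
          have h5 := mul_le_mul_of_nonneg_left h4cd (mul_nonneg hf he)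
          calc (f*(c+f+d-e))*(e*(c+e+d-f)) = (f*e)*((c+f+d-e)*(c+e+d-f)) := by ring
            _ ≤ (f*e)*(4*(c*d)) := h5
            _ = (2*(sc*sd)*(se*sf))^2 := by rw [hK2]; ring
        have hO3 : e*(c+e+d-f) ≤ 2*(sc*sd)*(se*sf) := by
          by_contra hcon
          push_neg at hcon
          nlinarith [mul_lt_mul'' hO2 hcon hK0 hK0]
        have hab : A*B ≤ (e+d)*(c+e) := mul_le_mul h2 h3 hB0 (by linarith)
        nlinarith [hab, hO3]
  have sumAB : A + B ≤ c + d + e + f := by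
    rcases le_total c d with h | h
    · linarith
    · linarith
  have huv : (1 + sc*sd)*(1 + se*sf) ≤ u*v :=
    mul_le_mul key1 key2 (by positivity) hu0
  have target : (1+A)*(1+B) ≤ (u+v)^2 := by
    nlinarith [prodAB, sumAB, huv, hu2, hv2, mul_nonneg hsc0 hsd0, mul_nonneg hse0 hsf0]
  calc Real.sqrt ((1+A)*(1+B)) ≤ Real.sqrt ((u+v)^2) := Real.sqrt_le_sqrt target
    _ = u + v := Real.sqrt_sq (by positivity)

theorem stmt_0 {X : Type*} [MetricSpace X]
    (hPtol : ∀ x y z t : X, dist x y * dist z t ≤ dist x z * dist y t + dist x t * dist y z)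
    (U : Set X) (hU : IsOpen U) (hbd : (frontier U).Nonempty)
    (x y z t : X) (hx : x ∈ U) (hy : y ∈ U) (hz : z ∈ U) (ht : t ∈ U) :
    Real.exp ((1 / 2) * rhoU U x y + (1 / 2) * rhoU U z t) ≤
      Real.exp ((1 / 2) * rhoU U x z + (1 / 2) * rhoU U y t) +
      Real.exp ((1 / 2) * rhoU U x t + (1 / 2) * rhoU U y z) := by
  -- basic positivity facts
  have hnotU : ∀ p ∈ frontier U, p ∉ U := by
    intro p hp
    rw [hU.frontier_eq] at hp
    exact hp.2
  have hppos : ∀ p ∈ frontier U, ∀ u ∈ U, 0 < dist p u := by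
    intro p hp u hu
    rcases eq_or_ne p u with rfl | hne
    · exact absurd hu (hnotU p hp)
    · exact dist_pos.mpr hne
  -- the inversion-distance sets and their sups
  set S : X → X → Set ℝ :=
    fun u v => {r : ℝ | ∃ p ∈ frontier U, r = dist u v / (dist p u * dist p v)} with hS
  set D : X → X → ℝ := fun u v => sSup (S u v) with hD
  have hSne : ∀ u v : X, (S u v).Nonempty := by
    rintro u v
    obtain ⟨p, hp⟩ := hbd
    exact ⟨_, p, hp, rfl⟩
  have hS0 : ∀ u v : X, ∀ r ∈ S u v, 0 ≤ r := by
    rintro u v r ⟨p, hp, rfl⟩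
    positivity
  have hSbdd : ∀ u ∈ U, ∀ v ∈ U, BddAbove (S u v) := by
    intro u hu v hv
    obtain ⟨εu, hεu, hballu⟩ := Metric.isOpen_iff.mp hU u hu
    obtain ⟨εv, hεv, hballv⟩ := Metric.isOpen_iff.mp hU v hv
    refine ⟨dist u v / (εu * εv), ?_⟩
    rintro r ⟨p, hp, rfl⟩
    have hpu : εu ≤ dist p u := by
      by_contra h
      push_neg at h
      exact hnotU p hp (hballu (Metric.mem_ball.mpr h))
    have hpv : εv ≤ dist p v := by
      by_contra h
      push_neg at h
      exact hnotU p hp (hballv (Metric.mem_ball.mpr h))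
    have hle : εu * εv ≤ dist p u * dist p v :=
      mul_le_mul hpu hpv (le_of_lt hεv) dist_nonneg
    exact div_le_div_of_nonneg_left dist_nonneg (by positivity) hle
  have hD0 : ∀ u v : X, 0 ≤ D u v := by
    intro u v
    exact Real.sSup_nonneg (hS0 u v)
  have hDsymm : ∀ u v : X, D u v = D v u := by
    intro u v
    have : S u v = S v u := by
      ext r
      constructor
      · rintro ⟨p, hp, rfl⟩
        exact ⟨p, hp, by rw [dist_comm u v, mul_comm]⟩
      · rintro ⟨p, hp, rfl⟩
        exact ⟨p, hp, by rw [dist_comm v u, mul_comm]⟩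
    simp only [hD, this]
  -- triangle inequality for D
  have hDtri : ∀ u ∈ U, ∀ v ∈ U, ∀ w ∈ U, D u v ≤ D u w + D w v := by
    intro u hu v hv w hw
    refine csSup_le (hSne u v) ?_
    rintro r ⟨p, hp, rfl⟩
    have ha : 0 < dist p u := hppos p hp u hu
    have hb : 0 < dist p v := hppos p hp v hv
    have hc : 0 < dist p w := hppos p hp w hw
    have key : dist u v * dist p w ≤ dist u w * dist p v + dist p u * dist w v := by
      have h := hPtol u v w p
      rw [dist_comm w p, dist_comm v p, dist_comm u p, dist_comm v w] at h
      exact h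
    have e1 : dist u w / (dist p u * dist p w) ≤ D u w :=
      le_csSup (hSbdd u hu w hw) ⟨p, hp, rfl⟩
    have e2 : dist w v / (dist p w * dist p v) ≤ D w v :=
      le_csSup (hSbdd w hw v hv) ⟨p, hp, rfl⟩
    have expand : dist u v / (dist p u * dist p v) ≤
        dist u w / (dist p u * dist p w) + dist w v / (dist p w * dist p v) := by
      rw [div_add_div _ _ (by positivity) (by positivity),
        div_le_div_iff₀ (by positivity) (by positivity)]
      nlinarith [mul_le_mul_of_nonneg_left key
        (le_of_lt (mul_pos (mul_pos ha hb) hc)), mul_pos ha hb, mul_pos hb hc,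
        mul_pos ha hc]
    linarith
  -- relating rhoU to D
  have hTbdd : ∀ u ∈ U, ∀ v ∈ U, BddAbove
      {r : ℝ | ∃ p ∈ frontier U, r = Real.log (1 + dist u v / (dist p u * dist p v))} := by
    intro u hu v hv
    refine ⟨Real.log (1 + D u v), ?_⟩
    rintro r ⟨p, hp, rfl⟩
    have h1 : dist u v / (dist p u * dist p v) ≤ D u v :=
      le_csSup (hSbdd u hu v hv) ⟨p, hp, rfl⟩
    have h0 : (0:ℝ) ≤ dist u v / (dist p u * dist p v) := by positivity
    exact Real.log_le_log (by linarith) (by linarith)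
  have hrho_le : ∀ u ∈ U, ∀ v ∈ U, Real.exp (rhoU U u v) ≤ 1 + D u v := by
    intro u hu v hv
    have h : rhoU U u v ≤ Real.log (1 + D u v) := by
      refine csSup_le ?_ ?_
      · obtain ⟨p, hp⟩ := hbd
        exact ⟨_, p, hp, rfl⟩
      · rintro r ⟨p, hp, rfl⟩
        have h1 : dist u v / (dist p u * dist p v) ≤ D u v :=
          le_csSup (hSbdd u hu v hv) ⟨p, hp, rfl⟩
        have h0 : (0:ℝ) ≤ dist u v / (dist p u * dist p v) := by positivity
        exact Real.log_le_log (by linarith) (by linarith)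
    calc Real.exp (rhoU U u v) ≤ Real.exp (Real.log (1 + D u v)) := Real.exp_le_exp.mpr h
      _ = 1 + D u v := Real.exp_log (by linarith [hD0 u v])
  have hrho_ge : ∀ u ∈ U, ∀ v ∈ U, 1 + D u v ≤ Real.exp (rhoU U u v) := by
    intro u hu v hv
    have h : D u v ≤ Real.exp (rhoU U u v) - 1 := by
      refine csSup_le (hSne u v) ?_
      rintro r ⟨p, hp, rfl⟩
      have h0 : (0:ℝ) ≤ dist u v / (dist p u * dist p v) := by positivity
      have hmem : Real.log (1 + dist u v / (dist p u * dist p v)) ∈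
          {r : ℝ | ∃ p ∈ frontier U, r = Real.log (1 + dist u v / (dist p u * dist p v))} :=
        ⟨p, hp, rfl⟩
      have hle : Real.log (1 + dist u v / (dist p u * dist p v)) ≤ rhoU U u v :=
        le_csSup (hTbdd u hu v hv) hmem
      have := Real.exp_le_exp.mpr hle
      rw [Real.exp_log (by linarith)] at this
      linarith
    linarith
  -- abbreviations
  have hexp_half : ∀ a b : ℝ, Real.exp ((1/2) * a + (1/2) * b)
      = Real.exp ((1/2) * a) * Real.exp ((1/2) * b) := fun a b => Real.exp_add _ _
  have hsq : ∀ a : ℝ, Real.exp ((1/2) * a) ^ 2 = Real.exp a := by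
    intro a
    rw [sq, ← Real.exp_add]
    congr 1
    ring
  -- triangle instantiations
  have h1 : D x y ≤ D x z + D y z := by
    have h := hDtri x hx y hy z hz
    rwa [hDsymm z y] at h
  have h2 : D x y ≤ D x t + D y t := by
    have h := hDtri x hx y hy t ht
    rwa [hDsymm t y] at h
  have h3 : D z t ≤ D x z + D x t := by
    have h := hDtri z hz t ht x hx
    rwa [hDsymm z x] at h
  have h4 : D z t ≤ D y z + D y t := by
    have h := hDtri z hz t ht y hy
    rwa [hDsymm z y] at h
  have hcore := core_ineq (D x y) (D z t) (D x z) (D y t) (D x t) (D y z)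
    (hD0 x y) (hD0 z t) (hD0 x z) (hD0 y t) (hD0 x t) (hD0 y z) h1 h2 h3 h4
  -- bounding the left side
  have lhs_le : Real.exp ((1/2) * rhoU U x y + (1/2) * rhoU U z t) ≤
      Real.sqrt ((1 + D x y) * (1 + D z t)) := by
    rw [hexp_half]
    have e1 : Real.exp ((1/2) * rhoU U x y) ≤ Real.sqrt (1 + D x y) := by
      have h2' : Real.exp ((1/2) * rhoU U x y) ^ 2 ≤ 1 + D x y := by
        rw [hsq]; exact hrho_le x hx y hy
      calc Real.exp ((1/2) * rhoU U x y)
          = Real.sqrt (Real.exp ((1/2) * rhoU U x y) ^ 2) :=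
            (Real.sqrt_sq (Real.exp_pos _).le).symm
        _ ≤ Real.sqrt (1 + D x y) := Real.sqrt_le_sqrt h2'
    have e2 : Real.exp ((1/2) * rhoU U z t) ≤ Real.sqrt (1 + D z t) := by
      have h2' : Real.exp ((1/2) * rhoU U z t) ^ 2 ≤ 1 + D z t := by
        rw [hsq]; exact hrho_le z hz t ht
      calc Real.exp ((1/2) * rhoU U z t)
          = Real.sqrt (Real.exp ((1/2) * rhoU U z t) ^ 2) :=
            (Real.sqrt_sq (Real.exp_pos _).le).symm
        _ ≤ Real.sqrt (1 + D z t) := Real.sqrt_le_sqrt h2'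
    calc Real.exp ((1/2) * rhoU U x y) * Real.exp ((1/2) * rhoU U z t)
        ≤ Real.sqrt (1 + D x y) * Real.sqrt (1 + D z t) :=
          mul_le_mul e1 e2 (Real.exp_pos _).le (Real.sqrt_nonneg _)
      _ = Real.sqrt ((1 + D x y) * (1 + D z t)) :=
          (Real.sqrt_mul (by linarith [hD0 x y]) _).symm
  -- bounding the right side terms from below
  have rhs_ge : ∀ u, u ∈ U → ∀ v, v ∈ U → ∀ w, w ∈ U → ∀ s, s ∈ U →
      Real.sqrt ((1 + D u v) * (1 + D w s)) ≤
        Real.exp ((1/2) * rhoU U u v + (1/2) * rhoU U w s) := by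
    intro u hu v hv w hw s hs
    rw [hexp_half]
    have e1 : Real.sqrt (1 + D u v) ≤ Real.exp ((1/2) * rhoU U u v) := by
      have h2' : 1 + D u v ≤ Real.exp ((1/2) * rhoU U u v) ^ 2 := by
        rw [hsq]; exact hrho_ge u hu v hv
      calc Real.sqrt (1 + D u v) ≤ Real.sqrt (Real.exp ((1/2) * rhoU U u v) ^ 2) :=
            Real.sqrt_le_sqrt h2'
        _ = Real.exp ((1/2) * rhoU U u v) := Real.sqrt_sq (Real.exp_pos _).le
    have e2 : Real.sqrt (1 + D w s) ≤ Real.exp ((1/2) * rhoU U w s) := by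
      have h2' : 1 + D w s ≤ Real.exp ((1/2) * rhoU U w s) ^ 2 := by
        rw [hsq]; exact hrho_ge w hw s hs
      calc Real.sqrt (1 + D w s) ≤ Real.sqrt (Real.exp ((1/2) * rhoU U w s) ^ 2) :=
            Real.sqrt_le_sqrt h2'
        _ = Real.exp ((1/2) * rhoU U w s) := Real.sqrt_sq (Real.exp_pos _).le
    calc Real.sqrt ((1 + D u v) * (1 + D w s))
        = Real.sqrt (1 + D u v) * Real.sqrt (1 + D w s) :=
          Real.sqrt_mul (by linarith [hD0 u v]) _
      _ ≤ Real.exp ((1/2) * rhoU U u v) * Real.exp ((1/2) * rhoU U w s) :=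
          mul_le_mul e1 e2 (Real.sqrt_nonneg _) (Real.exp_pos _).le
  calc Real.exp ((1/2) * rhoU U x y + (1/2) * rhoU U z t)
      ≤ Real.sqrt ((1 + D x y) * (1 + D z t)) := lhs_le
    _ ≤ Real.sqrt ((1 + D x z) * (1 + D y t)) + Real.sqrt ((1 + D x t) * (1 + D y z)) := hcore
    _ ≤ Real.exp ((1/2) * rhoU U x z + (1/2) * rhoU U y t) +
        Real.exp ((1/2) * rhoU U x t + (1/2) * rhoU U y z) :=
          add_le_add (rhs_ge x hx z hz y hy t ht) (rhs_ge x hx t ht y hy z hz)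
end

section
/- If α, β, γ, δ are nonnegative real numbers, then min{α+β, γ+δ} · min{α+γ, β+δ} ≤ αδ + βγ + 2·√(αβγδ). -/
lemma key_stmt2 (α β γ δ : ℝ) (hα : 0 ≤ α) (hβ : 0 ≤ β) (hγ : 0 ≤ γ) (hδ : 0 ≤ δ)
    (h1 : α + β ≤ γ + δ) (h2 : α + γ ≤ β + δ) :
    (α + β) * (α + γ) ≤ α * δ + β * γ + 2 * Real.sqrt (α * β * γ * δ) := by
  have hs : Real.sqrt (α * β * γ * δ) ^ 2 = α * β * γ * δ :=
    Real.sq_sqrt (by positivity)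
  have hnn : 0 ≤ Real.sqrt (α * β * γ * δ) := Real.sqrt_nonneg _
  have hαδ : α ≤ δ := by linarith
  by_cases h : α + β + γ - δ ≤ 0
  · nlinarith [mul_nonneg hα (neg_nonneg.mpr h)]
  · push_neg at h
    have ht : 0 ≤ α * (α + β + γ - δ) := by positivity
    have h3 : α + β + γ - δ ≤ 2 * β := by linarith
    have h4 : α + β + γ - δ ≤ 2 * γ := by linarith
    have htt : (α + β + γ - δ) * (α + β + γ - δ) ≤ (2 * β) * (2 * γ) :=
      mul_le_mul h3 h4 h.le (by positivity)
    have h5 : α * α ≤ α * δ := mul_le_mul_of_nonneg_left hαδ hα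
    have hsq : (α * (α + β + γ - δ))^2 ≤ 4 * (α * β * γ * δ) := by
      nlinarith [htt, h5, mul_nonneg hβ hγ, mul_nonneg hα hα,
        mul_le_mul_of_nonneg_right h5 (mul_nonneg hβ hγ),
        mul_le_mul_of_nonneg_left htt (mul_nonneg hα hα)]
    have : α * (α + β + γ - δ) ≤ 2 * Real.sqrt (α * β * γ * δ) := by
      nlinarith [sq_nonneg (2 * Real.sqrt (α * β * γ * δ) - α * (α + β + γ - δ)),
        sq_nonneg (2 * Real.sqrt (α * β * γ * δ) + α * (α + β + γ - δ))]
    nlinarith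

theorem stmt_2 (α β γ δ : ℝ) (hα : 0 ≤ α) (hβ : 0 ≤ β) (hγ : 0 ≤ γ) (hδ : 0 ≤ δ) :
    min (α + β) (γ + δ) * min (α + γ) (β + δ) ≤
      α * δ + β * γ + 2 * Real.sqrt (α * β * γ * δ) := by
  rcases le_total (α + β) (γ + δ) with h1 | h1 <;>
  rcases le_total (α + γ) (β + δ) with h2 | h2
  · rw [min_eq_left h1, min_eq_left h2]
    exact key_stmt2 α β γ δ hα hβ hγ hδ h1 h2
  · rw [min_eq_left h1, min_eq_right h2]
    have := key_stmt2 β α δ γ hβ hα hδ hγ (by linarith) (by linarith)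
    rw [show β * α * δ * γ = α * β * γ * δ by ring] at this
    nlinarith [this]
  · rw [min_eq_right h1, min_eq_left h2]
    have := key_stmt2 γ δ α β hγ hδ hα hβ (by linarith) (by linarith)
    rw [show γ * δ * α * β = α * β * γ * δ by ring] at this
    nlinarith [this]
  · rw [min_eq_right h1, min_eq_right h2]
    have := key_stmt2 δ γ β α hδ hγ hβ hα (by linarith) (by linarith)
    rw [show δ * γ * β * α = α * β * γ * δ by ring] at this
    nlinarith [this]
end

section
/- For nonnegative real numbers α, β, γ, δ, equality min{α+β, γ+δ} · min{α+γ, β+δ} = αδ + βγ + 2·√(αβγδ) holds if and only if at least one of the following (non-exclusive) conditions holds: (i) αδ = 0 and max{α,δ} ≥ |β−γ|; (ii) βγ = 0 and max{β,γ} ≥ |α−δ|; (iii) α = δ and β = γ. -/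
theorem core (α β γ δ : ℝ) (hα : 0 ≤ α) (hβ : 0 ≤ β) (hγ : 0 ≤ γ) (hδ : 0 ≤ δ)
    (hAB : α + β ≤ γ + δ) (hCD : α + γ ≤ β + δ)
    (heq : (α + β) * (α + γ) = α * δ + β * γ + 2 * Real.sqrt (α * β * γ * δ)) :
    (α * δ = 0 ∧ |β - γ| ≤ max α δ) ∨
    (β * γ = 0 ∧ |α - δ| ≤ max β γ) ∨
    (α = δ ∧ β = γ) := by
  set s := Real.sqrt (α * β * γ * δ) with hs_def
  have hs0 : 0 ≤ s := Real.sqrt_nonneg _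
  have hs2 : s ^ 2 = α * β * γ * δ := Real.sq_sqrt (by positivity)
  have habs : |β - γ| ≤ δ - α := abs_sub_le_iff.mpr ⟨by linarith, by linarith⟩
  have habs0 : (0:ℝ) ≤ |β - γ| := abs_nonneg _
  have hta : 0 ≤ δ - α := le_trans habs0 habs
  have h1 : α * (α + β + γ - δ) = 2 * s := by linear_combination heq
  rcases eq_or_lt_of_le hα with h0 | hpos
  · left
    refine ⟨by rw [← h0]; ring, ?_⟩
    have : |β - γ| ≤ δ := by linarith
    exact this.trans (le_max_right α δ)
  · have hE0 : 0 ≤ α + β + γ - δ := by nlinarith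
    have h2full : α ^ 2 * (α + β + γ - δ) ^ 2 = 4 * (α * β * γ * δ) := by
      linear_combination (α * (α + β + γ - δ) + 2 * s) * h1 + 4 * hs2
    have h2 : (α + β + γ - δ) ^ 2 * α = 4 * (β * γ * δ) :=
      mul_left_cancel₀ (ne_of_gt hpos)
        (show α * ((α + β + γ - δ) ^ 2 * α) = α * (4 * (β * γ * δ)) by
          linear_combination h2full)
    -- E ≤ 2β and E ≤ 2γ
    have hb' : β - γ ≤ |β - γ| := le_abs_self _
    have hc' : γ - β ≤ |β - γ| := by rw [abs_sub_comm]; exact le_abs_self _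
    have hEb : α + β + γ - δ ≤ 2 * β := by linarith
    have hEc : α + β + γ - δ ≤ 2 * γ := by linarith
    have hEsq : (α + β + γ - δ) * (α + β + γ - δ) ≤ (2 * β) * (2 * γ) :=
      mul_le_mul hEb hEc hE0 (by linarith)
    have hE2 : (α + β + γ - δ) ^ 2 ≤ 4 * (β * γ) := by nlinarith [hEsq]
    -- β*γ*(δ-α) = 0
    have hge : 0 ≤ β * γ * (δ - α) := mul_nonneg (mul_nonneg hβ hγ) hta
    have hle : β * γ * (δ - α) ≤ 0 := by nlinarith [h2, hE2]
    have hbgt : β * γ * (δ - α) = 0 := le_antisymm hle hge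
    have hE2eq : (α + β + γ - δ) ^ 2 = 4 * (β * γ) :=
      mul_left_cancel₀ (ne_of_gt hpos)
        (show α * ((α + β + γ - δ) ^ 2) = α * (4 * (β * γ)) by
          linear_combination h2 + 4 * hbgt)
    rcases eq_or_lt_of_le hta with ht0 | htpos
    · right; right
      have hαδ : α = δ := by linarith
      have hβγ : (β - γ) ^ 2 = 0 := by
        linear_combination hE2eq - (2 * (β + γ) + (α - δ)) * hαδ
      exact ⟨hαδ, by linarith [sq_eq_zero_iff.mp hβγ]⟩
    · have hbc : β * γ = 0 := by
        rcases mul_eq_zero.mp hbgt with h | h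
        · exact h
        · linarith
      have hEzero : (α + β + γ - δ) ^ 2 = 0 := by rw [hE2eq, hbc]; ring
      have hEz : α + β + γ - δ = 0 := by
        have := sq_eq_zero_iff.mp hEzero
        linarith [this]
      right; left
      refine ⟨hbc, ?_⟩
      have habs2 : |α - δ| = δ - α := by rw [abs_sub_comm]; exact abs_of_nonneg hta
      rw [habs2]
      rcases mul_eq_zero.mp hbc with h | h
      · have : δ - α = γ := by linarith
        rw [this]; exact le_max_right β γ
      · have : δ - α = β := by linarith
        rw [this]; exact le_max_left β γ

theorem stmt_3 (α β γ δ : ℝ) (hα : 0 ≤ α) (hβ : 0 ≤ β) (hγ : 0 ≤ γ) (hδ : 0 ≤ δ) :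
    min (α + β) (γ + δ) * min (α + γ) (β + δ) =
      α * δ + β * γ + 2 * Real.sqrt (α * β * γ * δ) ↔
    (α * δ = 0 ∧ |β - γ| ≤ max α δ) ∨
    (β * γ = 0 ∧ |α - δ| ≤ max β γ) ∨
    (α = δ ∧ β = γ) := by
  constructor
  · intro heq
    rcases le_total (α + β) (γ + δ) with hA | hA <;>
      rcases le_total (α + γ) (β + δ) with hC | hC
    · rw [min_eq_left hA, min_eq_left hC] at heq
      exact core α β γ δ hα hβ hγ hδ hA hC heq
    · rw [min_eq_left hA, min_eq_right hC] at heq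
      have h := core β α δ γ hβ hα hδ hγ (by linarith) (by linarith)
        (by rw [show β * α * δ * γ = α * β * γ * δ by ring]; linear_combination heq)
      rcases h with ⟨h1, h2⟩ | ⟨h1, h2⟩ | ⟨h1, h2⟩
      · exact Or.inr (Or.inl ⟨h1, h2⟩)
      · exact Or.inl ⟨by linear_combination h1, h2⟩
      · exact Or.inr (Or.inr ⟨h2, h1⟩)
    · rw [min_eq_right hA, min_eq_left hC] at heq
      have h := core γ δ α β hγ hδ hα hβ (by linarith) (by linarith)
        (by rw [show γ * δ * α * β = α * β * γ * δ by ring]; linear_combination heq)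
      rcases h with ⟨h1, h2⟩ | ⟨h1, h2⟩ | ⟨h1, h2⟩
      · rw [abs_sub_comm, max_comm] at h2
        exact Or.inr (Or.inl ⟨by linear_combination h1, h2⟩)
      · rw [abs_sub_comm, max_comm] at h2
        exact Or.inl ⟨by linear_combination h1, h2⟩
      · exact Or.inr (Or.inr ⟨h2.symm, h1.symm⟩)
    · rw [min_eq_right hA, min_eq_right hC] at heq
      have h := core δ γ β α hδ hγ hβ hα (by linarith) (by linarith)
        (by rw [show δ * γ * β * α = α * β * γ * δ by ring]; linear_combination heq)
      rcases h with ⟨h1, h2⟩ | ⟨h1, h2⟩ | ⟨h1, h2⟩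
      · rw [abs_sub_comm, max_comm] at h2
        exact Or.inl ⟨by linear_combination h1, h2⟩
      · rw [abs_sub_comm, max_comm] at h2
        exact Or.inr (Or.inl ⟨by linear_combination h1, h2⟩)
      · exact Or.inr (Or.inr ⟨h1.symm, h2.symm⟩)
  · rintro (⟨h1, h2⟩ | ⟨h1, h2⟩ | ⟨h1, h2⟩)
    · rcases mul_eq_zero.mp h1 with h | h
      · subst h
        rw [max_eq_right hδ] at h2
        obtain ⟨hb1, hb2⟩ := abs_sub_le_iff.mp h2
        rw [show (0:ℝ) * β * γ * δ = 0 by ring, Real.sqrt_zero,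
          min_eq_left (by linarith : (0:ℝ) + β ≤ γ + δ),
          min_eq_left (by linarith : (0:ℝ) + γ ≤ β + δ)]
        ring
      · subst h
        rw [max_eq_left hα] at h2
        obtain ⟨hb1, hb2⟩ := abs_sub_le_iff.mp h2
        rw [show α * β * γ * 0 = 0 by ring, Real.sqrt_zero,
          min_eq_right (by linarith : γ + 0 ≤ α + β),
          min_eq_right (by linarith : β + 0 ≤ α + γ)]
        ring
    · rcases mul_eq_zero.mp h1 with h | h
      · subst h
        rw [max_eq_right hγ] at h2
        obtain ⟨hb1, hb2⟩ := abs_sub_le_iff.mp h2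
        rw [show α * 0 * γ * δ = 0 by ring, Real.sqrt_zero,
          min_eq_left (by linarith : α + 0 ≤ γ + δ),
          min_eq_right (by linarith : (0:ℝ) + δ ≤ α + γ)]
        ring
      · subst h
        rw [max_eq_left hβ] at h2
        obtain ⟨hb1, hb2⟩ := abs_sub_le_iff.mp h2
        rw [show α * β * 0 * δ = 0 by ring, Real.sqrt_zero,
          min_eq_right (by linarith : (0:ℝ) + δ ≤ α + β),
          min_eq_left (by linarith : α + 0 ≤ β + δ)]
        ring
    · subst h1; subst h2
      rw [add_comm β α, min_self,
        show α * β * β * α = (α * β) ^ 2 by ring, Real.sqrt_sq (by positivity)]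
      ring
end

section
/- Let (X,d) be a Ptolemaic metric space and let U ⊆ X be an open set whose boundary ∂U is non-empty. For a,b ∈ U define λ(a,b) = sup_{u∈∂U} d(a,b)/(d(a,u)·d(b,u)). Then for all x,y,z,t ∈ U, (1+λ(x,y))·(1+λ(z,t)) ≤ (1+λ(x,z))·(1+λ(y,t)) + (1+λ(y,z))·(1+λ(x,t)) + 2·√((1+λ(x,z))·(1+λ(y,z))·(1+λ(x,t))·(1+λ(y,t))). -/
private lemma scalar_core (a b c d p q S : ℝ) (ha : 0 ≤ a) (hb : 0 ≤ b) (hc : 0 ≤ c)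
    (hd : 0 ≤ d) (hp : 0 ≤ p) (hq : 0 ≤ q)
    (hab : a ≤ b) (hac : a ≤ c) (had : a ≤ d) (hdc : d ≤ c)
    (hpac : p ≤ a + c) (hpbd : p ≤ b + d) (hqad : q ≤ a + d) (hqbc : q ≤ b + c)
    (hS : (1+a)*(1+b)*((1+c)*(1+d)) = S) :
    (1+p)*(1+q) ≤ (1+a)*(1+b) + (1+c)*(1+d) + 2*Real.sqrt S := by
  subst hS
  have hsq : (1+a)*(1+d) ≤ Real.sqrt ((1+a)*(1+b)*((1+c)*(1+d))) := by
    have e1 : (1+a)*(1+d) ≤ (1+b)*(1+c) :=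
      mul_le_mul (by linarith) (by linarith) (by linarith) (by linarith)
    have h2 : ((1+a)*(1+d))^2 ≤ (1+a)*(1+b)*((1+c)*(1+d)) := by
      nlinarith [mul_le_mul_of_nonneg_left e1 (show (0:ℝ) ≤ (1+a)*(1+d) by positivity)]
    calc (1+a)*(1+d) = Real.sqrt (((1+a)*(1+d))^2) := (Real.sqrt_sq (by positivity)).symm
      _ ≤ _ := Real.sqrt_le_sqrt h2
  rcases le_total (a+c) (b+d) with h | h
  · have h1 : (1+p)*(1+q) ≤ (1+(a+c))*(1+(a+d)) :=
      mul_le_mul (by linarith) (by linarith) (by linarith) (by linarith)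
    nlinarith [hsq, mul_nonneg (show (0:ℝ) ≤ 1+a by linarith) (show (0:ℝ) ≤ b+d-a-c by linarith)]
  · have h1 : (1+p)*(1+q) ≤ (1+(b+d))*(1+(a+d)) :=
      mul_le_mul (by linarith) (by linarith) (by linarith) (by linarith)
    nlinarith [hsq, mul_nonneg (show (0:ℝ) ≤ 1+d by linarith) (show (0:ℝ) ≤ a+c-b-d by linarith)]

private lemma scalar_min (a b c d p q S : ℝ) (ha : 0 ≤ a) (hb : 0 ≤ b) (hc : 0 ≤ c)
    (hd : 0 ≤ d) (hp : 0 ≤ p) (hq : 0 ≤ q)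
    (hab : a ≤ b) (hac : a ≤ c) (had : a ≤ d)
    (hpac : p ≤ a + c) (hpbd : p ≤ b + d) (hqad : q ≤ a + d) (hqbc : q ≤ b + c)
    (hS : (1+a)*(1+b)*((1+c)*(1+d)) = S) :
    (1+p)*(1+q) ≤ (1+a)*(1+b) + (1+c)*(1+d) + 2*Real.sqrt S := by
  rcases le_total d c with h | h
  · exact scalar_core a b c d p q S ha hb hc hd hp hq hab hac had h hpac hpbd hqad hqbc hS
  · have H := scalar_core a b d c q p S ha hb hd hc hq hp hab had hac h hqad hqbc hpac hpbd
      (by rw [← hS]; ring)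
    nlinarith [H]

private lemma scalar (a b c d p q S : ℝ) (ha : 0 ≤ a) (hb : 0 ≤ b) (hc : 0 ≤ c)
    (hd : 0 ≤ d) (hp : 0 ≤ p) (hq : 0 ≤ q)
    (hpac : p ≤ a + c) (hpbd : p ≤ b + d) (hqad : q ≤ a + d) (hqbc : q ≤ b + c)
    (hS : (1+a)*(1+b)*((1+c)*(1+d)) = S) :
    (1+p)*(1+q) ≤ (1+a)*(1+b) + (1+c)*(1+d) + 2*Real.sqrt S := by
  rcases le_total a b with h1 | h1 <;> rcases le_total c d with h2 | h2
  · rcases le_total a c with h3 | h3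
    · exact scalar_min a b c d p q S ha hb hc hd hp hq h1 h3 (by linarith) hpac hpbd hqad hqbc hS
    · have H := scalar_min c d a b p q S hc hd ha hb hp hq h2 h3 (by linarith)
        (by linarith) (by linarith) (by linarith) (by linarith) (by rw [← hS]; ring)
      nlinarith [H]
  · rcases le_total a d with h3 | h3
    · exact scalar_min a b c d p q S ha hb hc hd hp hq h1 (by linarith) h3 hpac hpbd hqad hqbc hS
    · have H := scalar_min d c b a p q S hd hc hb ha hp hq h2 (by linarith) (by linarith)
        (by linarith) (by linarith) (by linarith) (by linarith) (by rw [← hS]; ring)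
      nlinarith [H]
  · rcases le_total b c with h3 | h3
    · have H := scalar_min b a d c p q S hb ha hd hc hp hq h1 (by linarith) h3
        (by linarith) (by linarith) (by linarith) (by linarith) (by rw [← hS]; ring)
      nlinarith [H]
    · have H := scalar_min c d a b p q S hc hd ha hb hp hq h2 (by linarith) h3
        (by linarith) (by linarith) (by linarith) (by linarith) (by rw [← hS]; ring)
      nlinarith [H]
  · rcases le_total b d with h3 | h3
    · have H := scalar_min b a d c p q S hb ha hd hc hp hq h1 h3 (by linarith)
        (by linarith) (by linarith) (by linarith) (by linarith) (by rw [← hS]; ring)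
      nlinarith [H]
    · have H := scalar_min d c b a p q S hd hc hb ha hp hq h2 h3 (by linarith)
        (by linarith) (by linarith) (by linarith) (by linarith) (by rw [← hS]; ring)
      nlinarith [H]

noncomputable def lam {X : Type*} [MetricSpace X] (U : Set X) (a b : X) : ℝ :=
  sSup {r : ℝ | ∃ u ∈ frontier U, r = dist a b / (dist a u * dist b u)}

theorem stmt_5 {X : Type*} [MetricSpace X]
    (hPtol : ∀ x y z t : X, dist x y * dist z t ≤ dist x z * dist y t + dist x t * dist y z)
    (U : Set X) (hU : IsOpen U) (hbd : (frontier U).Nonempty)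
    (x y z t : X) (hx : x ∈ U) (hy : y ∈ U) (hz : z ∈ U) (ht : t ∈ U) :
    (1 + lam U x y) * (1 + lam U z t) ≤
      (1 + lam U x z) * (1 + lam U y t) + (1 + lam U y z) * (1 + lam U x t) +
        2 * Real.sqrt ((1 + lam U x z) * (1 + lam U y z) * (1 + lam U x t) * (1 + lam U y t)) := by
  -- positivity of distances to the frontier
  have hfr : ∀ w ∈ U, ∀ u ∈ frontier U, 0 < dist w u := by
    intro w hw u hu
    have hun : u ∉ U := by
      rw [hU.frontier_eq] at hu
      exact hu.2
    rw [dist_pos]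
    rintro rfl
    exact hun hw
  -- boundedness of the defining sets
  have hbdd : ∀ a ∈ U, ∀ b ∈ U,
      BddAbove {r : ℝ | ∃ u ∈ frontier U, r = dist a b / (dist a u * dist b u)} := by
    intro a ha b hb2
    obtain ⟨ra, hra, hball⟩ := Metric.isOpen_iff.mp hU a ha
    obtain ⟨rb, hrb, hballb⟩ := Metric.isOpen_iff.mp hU b hb2
    refine ⟨dist a b / (ra * rb), ?_⟩
    rintro r ⟨u, hu, rfl⟩
    have hun : u ∉ U := by rw [hU.frontier_eq] at hu; exact hu.2
    have h1 : ra ≤ dist a u := by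
      by_contra hlt
      exact hun (hball (by rw [Metric.mem_ball, dist_comm]; linarith))
    have h2 : rb ≤ dist b u := by
      by_contra hlt
      exact hun (hballb (by rw [Metric.mem_ball, dist_comm]; linarith))
    apply div_le_div_of_nonneg_left dist_nonneg (mul_pos hra hrb)
    exact mul_le_mul h1 h2 hrb.le dist_nonneg
  -- membership bound
  have hle : ∀ a ∈ U, ∀ b ∈ U, ∀ u ∈ frontier U,
      dist a b / (dist a u * dist b u) ≤ lam U a b := by
    intro a ha b hb2 u hu
    exact le_csSup (hbdd a ha b hb2) ⟨u, hu, rfl⟩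
  have hle' : ∀ a ∈ U, ∀ b ∈ U, ∀ u ∈ frontier U,
      dist b a / (dist b u * dist a u) ≤ lam U a b := by
    intro a ha b hb2 u hu
    rw [dist_comm b a, mul_comm]
    exact hle a ha b hb2 u hu
  have hlam0 : ∀ a ∈ U, ∀ b ∈ U, 0 ≤ lam U a b := by
    intro a ha b hb2
    obtain ⟨u, hu⟩ := hbd
    exact le_trans (by positivity) (hle a ha b hb2 u hu)
  -- sup bound
  have hsup : ∀ a ∈ U, ∀ b ∈ U, ∀ K : ℝ,
      (∀ u ∈ frontier U, dist a b / (dist a u * dist b u) ≤ K) → lam U a b ≤ K := by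
    intro a ha b hb2 K hK
    apply csSup_le
    · obtain ⟨u, hu⟩ := hbd
      exact ⟨_, u, hu, rfl⟩
    · rintro r ⟨u, hu, rfl⟩
      exact hK u hu
  -- triangle inequality for the inverted distances
  have htri : ∀ p q r : X, p ∈ U → q ∈ U → r ∈ U → ∀ u ∈ frontier U,
      dist p q / (dist p u * dist q u) ≤
        dist p r / (dist p u * dist r u) + dist q r / (dist q u * dist r u) := by
    intro p q r hp hq hr u hu
    have hpu := hfr p hp u hu
    have hqu := hfr q hq u hu
    have hru := hfr r hr u hu
    have hP := hPtol p q r u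
    rw [div_add_div _ _ (by positivity) (by positivity), div_le_div_iff₀ (by positivity) (by positivity)]
    nlinarith [mul_le_mul_of_nonneg_right hP (by positivity : (0:ℝ) ≤ dist r u * dist p u * dist q u)]
  -- pointwise inequality
  have key : ∀ u ∈ frontier U, ∀ v ∈ frontier U,
      (1 + dist x y / (dist x u * dist y u)) * (1 + dist z t / (dist z v * dist t v)) ≤
        (1 + lam U x z) * (1 + lam U y t) + (1 + lam U y z) * (1 + lam U x t) +
          2 * Real.sqrt ((1 + lam U x z) * (1 + lam U y z) * (1 + lam U x t) * (1 + lam U y t)) := by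
    intro u hu v hv
    have hpuxy := hfr x hx u hu
    apply scalar (lam U x z) (lam U y t) (lam U y z) (lam U x t) _ _ _
      (hlam0 x hx z hz) (hlam0 y hy t ht) (hlam0 y hy z hz) (hlam0 x hx t ht)
      (by positivity) (by positivity)
    · calc dist x y / (dist x u * dist y u) ≤
          dist x z / (dist x u * dist z u) + dist y z / (dist y u * dist z u) :=
            htri x y z hx hy hz u hu
        _ ≤ lam U x z + lam U y z :=
            add_le_add (hle x hx z hz u hu) (hle y hy z hz u hu)
    · calc dist x y / (dist x u * dist y u) ≤
          dist x t / (dist x u * dist t u) + dist y t / (dist y u * dist t u) :=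
            htri x y t hx hy ht u hu
        _ ≤ lam U y t + lam U x t := by
            have h1 := hle x hx t ht u hu
            have h2 := hle y hy t ht u hu
            linarith
    · calc dist z t / (dist z v * dist t v) ≤
          dist z x / (dist z v * dist x v) + dist t x / (dist t v * dist x v) :=
            htri z t x hz ht hx v hv
        _ ≤ lam U x z + lam U x t :=
            add_le_add (hle' x hx z hz v hv) (hle' x hx t ht v hv)
    · calc dist z t / (dist z v * dist t v) ≤
          dist z y / (dist z v * dist y v) + dist t y / (dist t v * dist y v) :=
            htri z t y hz ht hy v hv
        _ ≤ lam U y t + lam U y z := by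
            have h1 := hle' y hy z hz v hv
            have h2 := hle' y hy t ht v hv
            linarith
    · ring
  set R := (1 + lam U x z) * (1 + lam U y t) + (1 + lam U y z) * (1 + lam U x t) +
      2 * Real.sqrt ((1 + lam U x z) * (1 + lam U y z) * (1 + lam U x t) * (1 + lam U y t)) with hR
  have hzt0 : (0:ℝ) < 1 + lam U z t := by
    have := hlam0 z hz t ht; linarith
  have h2 : ∀ u ∈ frontier U,
      (1 + dist x y / (dist x u * dist y u)) * (1 + lam U z t) ≤ R := by
    intro u hu
    have hpu : (0:ℝ) < 1 + dist x y / (dist x u * dist y u) := by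
      have hxu := hfr x hx u hu
      have hyu := hfr y hy u hu
      positivity
    have step : lam U z t ≤ R / (1 + dist x y / (dist x u * dist y u)) - 1 := by
      apply hsup z hz t ht
      intro v hv
      have h' := key u hu v hv
      have h2' : 1 + dist z t / (dist z v * dist t v) ≤
          R / (1 + dist x y / (dist x u * dist y u)) := by
        rw [le_div_iff₀ hpu]
        calc (1 + dist z t / (dist z v * dist t v)) * (1 + dist x y / (dist x u * dist y u))
            = (1 + dist x y / (dist x u * dist y u)) * (1 + dist z t / (dist z v * dist t v)) :=
              mul_comm _ _
          _ ≤ R := h'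
      linarith
    have step2 : 1 + lam U z t ≤ R / (1 + dist x y / (dist x u * dist y u)) := by linarith
    calc (1 + dist x y / (dist x u * dist y u)) * (1 + lam U z t)
        ≤ (1 + dist x y / (dist x u * dist y u)) *
            (R / (1 + dist x y / (dist x u * dist y u))) :=
          mul_le_mul_of_nonneg_left step2 hpu.le
      _ = R := by field_simp
  have h3 : lam U x y ≤ R / (1 + lam U z t) - 1 := by
    apply hsup x hx y hy
    intro u hu
    have h2' : 1 + dist x y / (dist x u * dist y u) ≤ R / (1 + lam U z t) := by
      rw [le_div_iff₀ hzt0]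
      exact h2 u hu
    linarith
  calc (1 + lam U x y) * (1 + lam U z t) ≤ (R / (1 + lam U z t)) * (1 + lam U z t) :=
      mul_le_mul_of_nonneg_right (by linarith) hzt0.le
    _ = R := div_mul_cancel₀ R hzt0.ne'
end

section
/- Let (X,d) be a Ptolemaic metric space and let U ⊆ X be an open set whose boundary ∂U is non-empty. For a,b ∈ U define λ(a,b) = sup_{u∈∂U} d(a,b)/(d(a,u)·d(b,u)). Then for all x,y,z,t ∈ U, (1+λ(x,y))·(1+λ(z,t)) ≤ 4·max{(1+λ(x,z))·(1+λ(y,t)), (1+λ(y,z))·(1+λ(x,t))}. -/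
lemma key_arith (A B C D p q : ℝ) (hA : 0 ≤ A) (hB : 0 ≤ B) (hC : 0 ≤ C) (hD : 0 ≤ D)
    (hp : 0 ≤ p) (hq : 0 ≤ q)
    (h1 : p ≤ A + C) (h2 : p ≤ B + D) (h3 : q ≤ A + D) (h4 : q ≤ B + C) :
    (1 + p) * (1 + q) ≤ 4 * max ((1 + A) * (1 + B)) ((1 + C) * (1 + D)) := by
  have hMl : (1+A)*(1+B) ≤ max ((1 + A) * (1 + B)) ((1 + C) * (1 + D)) := le_max_left _ _
  have hMr : (1+C)*(1+D) ≤ max ((1 + A) * (1 + B)) ((1 + C) * (1 + D)) := le_max_right _ _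
  set M := max ((1 + A) * (1 + B)) ((1 + C) * (1 + D)) with hM
  have step : ∀ u v : ℝ, 0 ≤ u → 0 ≤ v → 1 + p ≤ 2*u → 1 + q ≤ 2*v → u*v ≤ M →
      (1+p)*(1+q) ≤ 4*M := by
    intro u v hu hv h h' huv
    have := mul_le_mul h h' (by linarith) (by linarith)
    nlinarith
  -- four cases for the maximal one among A,B,C,D, each with subcases
  have caseA : B ≤ A → C ≤ A → D ≤ A → (1+p)*(1+q) ≤ 4*M := by
    intro hBA hCA hDA
    rcases le_total C B with h5 | h5
    · exact step (1+A) (1+B) (by linarith) (by linarith) (by linarith) (by linarith) hMl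
    · rcases le_total B D with h6 | h6
      · exact step (1+D) (1+C) (by linarith) (by linarith) (by linarith) (by linarith)
          (by nlinarith)
      · exact step (1+B) (1+C) (by linarith) (by linarith) (by linarith) (by linarith)
          (by nlinarith [mul_nonneg (show (0:ℝ) ≤ 1+B by linarith) (show (0:ℝ) ≤ A - C by linarith)])
  have caseB : A ≤ B → C ≤ B → D ≤ B → (1+p)*(1+q) ≤ 4*M := by
    intro hAB hCB hDB
    rcases le_total D A with h5 | h5
    · exact step (1+B) (1+A) (by linarith) (by linarith) (by linarith) (by linarith)
        (by nlinarith)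
    · rcases le_total A C with h6 | h6
      · exact step (1+C) (1+D) (by linarith) (by linarith) (by linarith) (by linarith) hMr
      · exact step (1+A) (1+D) (by linarith) (by linarith) (by linarith) (by linarith)
          (by nlinarith [mul_nonneg (show (0:ℝ) ≤ 1+A by linarith) (show (0:ℝ) ≤ B - D by linarith)])
  have caseC : A ≤ C → B ≤ C → D ≤ C → (1+p)*(1+q) ≤ 4*M := by
    intro hAC hBC hDC
    rcases le_total A D with h5 | h5
    · exact step (1+C) (1+D) (by linarith) (by linarith) (by linarith) (by linarith) hMr
    · rcases le_total D B with h6 | h6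
      · exact step (1+B) (1+A) (by linarith) (by linarith) (by linarith) (by linarith)
          (by nlinarith)
      · exact step (1+D) (1+A) (by linarith) (by linarith) (by linarith) (by linarith)
          (by nlinarith [mul_nonneg (show (0:ℝ) ≤ 1+D by linarith) (show (0:ℝ) ≤ C - A by linarith)])
  have caseD : A ≤ D → B ≤ D → C ≤ D → (1+p)*(1+q) ≤ 4*M := by
    intro hAD hBD hCD
    rcases le_total B C with h5 | h5
    · exact step (1+D) (1+C) (by linarith) (by linarith) (by linarith) (by linarith)
        (by nlinarith)
    · rcases le_total C A with h6 | h6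
      · exact step (1+A) (1+B) (by linarith) (by linarith) (by linarith) (by linarith) hMl
      · exact step (1+C) (1+B) (by linarith) (by linarith) (by linarith) (by linarith)
          (by nlinarith [mul_nonneg (show (0:ℝ) ≤ 1+C by linarith) (show (0:ℝ) ≤ D - B by linarith)])
  rcases le_total A B with h | h <;> rcases le_total C D with h' | h'
  · rcases le_total B D with h'' | h''
    · exact caseD (by linarith) h'' h'
    · exact caseB h (by linarith) h''
  · rcases le_total B C with h'' | h''
    · exact caseC (by linarith) h'' h'
    · exact caseB h h'' (by linarith)
  · rcases le_total A D with h'' | h''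
    · exact caseD h'' (by linarith) h'
    · exact caseA h (by linarith) h''
  · rcases le_total A C with h'' | h''
    · exact caseC h'' (by linarith) h'
    · exact caseA h h'' (by linarith)


section lamlem
variable {X : Type*} [MetricSpace X] {U : Set X}

lemma notMem_frontier (hU : IsOpen U) {a : X} (ha : a ∈ U) : a ∉ frontier U :=
  fun h => (hU.frontier_eq ▸ h).2 ha

lemma dist_frontier_pos (hU : IsOpen U) {a u : X} (ha : a ∈ U) (hu : u ∈ frontier U) :
    0 < dist a u :=
  dist_pos.2 fun heq => (hU.frontier_eq ▸ hu).2 (heq ▸ ha)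

lemma lam_bddAbove (hU : IsOpen U) {a b : X} (ha : a ∈ U) (hb : b ∈ U) :
    BddAbove {r : ℝ | ∃ u ∈ frontier U, r = dist a b / (dist a u * dist b u)} := by
  rcases (frontier U).eq_empty_or_nonempty with he | hbd
  · refine ⟨0, ?_⟩
    rintro r ⟨u, hu, rfl⟩
    rw [he] at hu
    exact absurd hu (Set.notMem_empty u)
  have hfc : IsClosed (frontier U) := isClosed_frontier
  have hda : 0 < Metric.infDist a (frontier U) :=
    (hfc.notMem_iff_infDist_pos hbd).1 (notMem_frontier hU ha)
  have hdb : 0 < Metric.infDist b (frontier U) :=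
    (hfc.notMem_iff_infDist_pos hbd).1 (notMem_frontier hU hb)
  refine ⟨dist a b / (Metric.infDist a (frontier U) * Metric.infDist b (frontier U)),
    fun r hr => ?_⟩
  obtain ⟨u, hu, rfl⟩ := hr
  have h1 := Metric.infDist_le_dist_of_mem (x := a) hu
  have h2 := Metric.infDist_le_dist_of_mem (x := b) hu
  gcongr

lemma lam_nonneg (hU : IsOpen U) (hbd : (frontier U).Nonempty) {a b : X}
    (ha : a ∈ U) (hb : b ∈ U) : 0 ≤ lam U a b := by
  obtain ⟨u, hu⟩ := hbd
  have hm : dist a b / (dist a u * dist b u) ∈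
      {r : ℝ | ∃ u ∈ frontier U, r = dist a b / (dist a u * dist b u)} := ⟨u, hu, rfl⟩
  refine le_trans ?_ (le_csSup (lam_bddAbove hU ha hb) hm)
  positivity

lemma lam_symm (a b : X) : lam U a b = lam U b a := by
  unfold lam
  congr 1
  ext r
  constructor <;> rintro ⟨u, hu, rfl⟩ <;> exact ⟨u, hu, by rw [dist_comm a b, mul_comm]⟩

lemma lam_triangle (hPtol : ∀ x y z t : X, dist x y * dist z t ≤ dist x z * dist y t + dist x t * dist y z)
    (hU : IsOpen U) (hbd : (frontier U).Nonempty) {a b c : X}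
    (ha : a ∈ U) (hb : b ∈ U) (hc : c ∈ U) :
    lam U a c ≤ lam U a b + lam U b c := by
  apply csSup_le
  · obtain ⟨u, hu⟩ := hbd
    exact ⟨_, u, hu, rfl⟩
  rintro r ⟨u, hu, rfl⟩
  have da := dist_frontier_pos hU ha hu
  have db := dist_frontier_pos hU hb hu
  have dc := dist_frontier_pos hU hc hu
  have key : dist a c / (dist a u * dist c u) ≤
      dist a b / (dist a u * dist b u) + dist b c / (dist b u * dist c u) := by
    rw [div_add_div _ _ (by positivity) (by positivity), div_le_div_iff₀ (by positivity) (by positivity)]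
    have hP := hPtol a c b u
    rw [dist_comm c b] at hP
    nlinarith [mul_le_mul_of_nonneg_right hP (show 0 ≤ dist a u * dist b u * dist c u by positivity),
      dist_nonneg (x := a) (y := c), dist_nonneg (x := a) (y := b), dist_nonneg (x := b) (y := c)]
  refine key.trans (add_le_add ?_ ?_)
  · exact le_csSup (lam_bddAbove hU ha hb) ⟨u, hu, rfl⟩
  · exact le_csSup (lam_bddAbove hU hb hc) ⟨u, hu, rfl⟩

end lamlem

theorem stmt_6 {X : Type*} [MetricSpace X]
    (hPtol : ∀ x y z t : X, dist x y * dist z t ≤ dist x z * dist y t + dist x t * dist y z)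
    (U : Set X) (hU : IsOpen U) (hbd : (frontier U).Nonempty)
    (x y z t : X) (hx : x ∈ U) (hy : y ∈ U) (hz : z ∈ U) (ht : t ∈ U) :
    (1 + lam U x y) * (1 + lam U z t) ≤
      4 * max ((1 + lam U x z) * (1 + lam U y t)) ((1 + lam U y z) * (1 + lam U x t)) := by
  have h1 : lam U x y ≤ lam U x z + lam U y z := by
    rw [lam_symm (U := U) y z]
    exact lam_triangle hPtol hU hbd hx hz hy
  have h2 : lam U x y ≤ lam U y t + lam U x t := by
    have := lam_triangle hPtol hU hbd hx ht hy
    rw [lam_symm (U := U) t y] at this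
    linarith
  have h3 : lam U z t ≤ lam U x z + lam U x t := by
    have := lam_triangle hPtol hU hbd hz hx ht
    rw [lam_symm (U := U) z x] at this
    linarith
  have h4 : lam U z t ≤ lam U y t + lam U y z := by
    have := lam_triangle hPtol hU hbd hz hy ht
    rw [lam_symm (U := U) z y] at this
    linarith
  exact key_arith _ _ _ _ _ _ (lam_nonneg hU hbd hx hz) (lam_nonneg hU hbd hy ht)
    (lam_nonneg hU hbd hy hz) (lam_nonneg hU hbd hx ht)
    (lam_nonneg hU hbd hx hy) (lam_nonneg hU hbd hz ht)
    h1 h2 h3 h4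
end

section
/- Let (X,d) be a Ptolemaic metric space and let U ⊆ X be an open set whose boundary ∂U is non-empty. For a,b ∈ U define λ(a,b) = sup_{u∈∂U} d(a,b)/(d(a,u)·d(b,u)). Then for all x,y,z,t ∈ U, √((1+λ(x,y))·(1+λ(z,t))) ≤ √((1+λ(x,z))·(1+λ(y,t))) + √((1+λ(x,t))·(1+λ(y,z))). -/
set_option maxHeartbeats 1000000

lemma key_ineq_aux (a b c e f g u v : ℝ) (ha : 0 ≤ a) (hb : 0 ≤ b)
    (hc : 0 ≤ c) (he : 0 ≤ e) (hf : 0 ≤ f) (hg : 0 ≤ g)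
    (hu0 : 0 ≤ u) (hv0 : 0 ≤ v)
    (hu : u ^ 2 = (1 + c) * (1 + e)) (hv : v ^ 2 = (1 + f) * (1 + g))
    (h1 : a ≤ c + g) (h2 : a ≤ e + f) (h3 : b ≤ e + g) (h4 : b ≤ c + f) :
    (1 + a) * (1 + b) ≤ (u + v) ^ 2 := by
  rcases le_total c e with hce | hce <;> rcases le_total f g with hfg | hfg
  · have hu1 : 1 + c ≤ u := by
      refine le_of_pow_le_pow_left₀ two_ne_zero hu0 ?_
      rw [hu]; nlinarith
    have hv1 : 1 + f ≤ v := by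
      refine le_of_pow_le_pow_left₀ two_ne_zero hv0 ?_
      rw [hv]; nlinarith
    have huv : (1 + c) * (1 + f) ≤ u * v :=
      mul_le_mul hu1 hv1 (by linarith) hu0
    rcases le_total (c + g) (e + f) with hA | hA <;> rcases le_total (e + g) (c + f) with hB | hB <;>
      nlinarith [huv, mul_le_mul h1 h3 hb (by linarith : (0:ℝ) ≤ c + g),
        mul_le_mul h1 h4 hb (by linarith : (0:ℝ) ≤ c + g),
        mul_le_mul h2 h3 hb (by linarith : (0:ℝ) ≤ e + f),
        mul_le_mul h2 h4 hb (by linarith : (0:ℝ) ≤ e + f)]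
  · have hu1 : 1 + c ≤ u := by
      refine le_of_pow_le_pow_left₀ two_ne_zero hu0 ?_
      rw [hu]; nlinarith
    have hv1 : 1 + g ≤ v := by
      refine le_of_pow_le_pow_left₀ two_ne_zero hv0 ?_
      rw [hv]; nlinarith
    have huv : (1 + c) * (1 + g) ≤ u * v :=
      mul_le_mul hu1 hv1 (by linarith) hu0
    rcases le_total (c + g) (e + f) with hA | hA <;> rcases le_total (e + g) (c + f) with hB | hB <;>
      nlinarith [huv, mul_le_mul h1 h3 hb (by linarith : (0:ℝ) ≤ c + g),
        mul_le_mul h1 h4 hb (by linarith : (0:ℝ) ≤ c + g),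
        mul_le_mul h2 h3 hb (by linarith : (0:ℝ) ≤ e + f),
        mul_le_mul h2 h4 hb (by linarith : (0:ℝ) ≤ e + f)]
  · have hu1 : 1 + e ≤ u := by
      refine le_of_pow_le_pow_left₀ two_ne_zero hu0 ?_
      rw [hu]; nlinarith
    have hv1 : 1 + f ≤ v := by
      refine le_of_pow_le_pow_left₀ two_ne_zero hv0 ?_
      rw [hv]; nlinarith
    have huv : (1 + e) * (1 + f) ≤ u * v :=
      mul_le_mul hu1 hv1 (by linarith) hu0
    rcases le_total (c + g) (e + f) with hA | hA <;> rcases le_total (e + g) (c + f) with hB | hB <;>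
      nlinarith [huv, mul_le_mul h1 h3 hb (by linarith : (0:ℝ) ≤ c + g),
        mul_le_mul h1 h4 hb (by linarith : (0:ℝ) ≤ c + g),
        mul_le_mul h2 h3 hb (by linarith : (0:ℝ) ≤ e + f),
        mul_le_mul h2 h4 hb (by linarith : (0:ℝ) ≤ e + f)]
  · have hu1 : 1 + e ≤ u := by
      refine le_of_pow_le_pow_left₀ two_ne_zero hu0 ?_
      rw [hu]; nlinarith
    have hv1 : 1 + g ≤ v := by
      refine le_of_pow_le_pow_left₀ two_ne_zero hv0 ?_
      rw [hv]; nlinarith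
    have huv : (1 + e) * (1 + g) ≤ u * v :=
      mul_le_mul hu1 hv1 (by linarith) hu0
    rcases le_total (c + g) (e + f) with hA | hA <;> rcases le_total (e + g) (c + f) with hB | hB <;>
      nlinarith [huv, mul_le_mul h1 h3 hb (by linarith : (0:ℝ) ≤ c + g),
        mul_le_mul h1 h4 hb (by linarith : (0:ℝ) ≤ c + g),
        mul_le_mul h2 h3 hb (by linarith : (0:ℝ) ≤ e + f),
        mul_le_mul h2 h4 hb (by linarith : (0:ℝ) ≤ e + f)]

theorem stmt_7 {X : Type*} [MetricSpace X]
    (hPtol : ∀ x y z t : X, dist x y * dist z t ≤ dist x z * dist y t + dist x t * dist y z)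
    (U : Set X) (hU : IsOpen U) (hbd : (frontier U).Nonempty)
    (x y z t : X) (hx : x ∈ U) (hy : y ∈ U) (hz : z ∈ U) (ht : t ∈ U) :
    Real.sqrt ((1 + lam U x y) * (1 + lam U z t)) ≤
      Real.sqrt ((1 + lam U x z) * (1 + lam U y t)) +
      Real.sqrt ((1 + lam U x t) * (1 + lam U y z)) := by
  classical
  have hfr : ∀ u ∈ frontier U, u ∉ U := by
    intro u hu
    rw [hU.frontier_eq] at hu
    exact hu.2
  have hpos : ∀ a ∈ U, ∀ u ∈ frontier U, 0 < dist a u := by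
    intro a ha u hu
    rcases eq_or_ne a u with rfl | h
    · exact absurd ha (hfr a hu)
    · exact dist_pos.mpr h
  have hsep : ∀ a ∈ U, ∃ ε > 0, ∀ u ∈ frontier U, ε ≤ dist a u := by
    intro a ha
    obtain ⟨ε, hε, hball⟩ := Metric.isOpen_iff.mp hU a ha
    refine ⟨ε, hε, fun u hu => ?_⟩
    by_contra h
    push_neg at h
    exact hfr u hu (hball (by rwa [Metric.mem_ball, dist_comm]))
  have hne : ∀ a b : X, {r : ℝ | ∃ u ∈ frontier U, r = dist a b / (dist a u * dist b u)}.Nonempty := by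
    intro a b
    obtain ⟨u0, hu0⟩ := hbd
    exact ⟨_, u0, hu0, rfl⟩
  have hbdd : ∀ a b, a ∈ U → b ∈ U →
      BddAbove {r : ℝ | ∃ u ∈ frontier U, r = dist a b / (dist a u * dist b u)} := by
    intro a b ha hb
    obtain ⟨εa, hεa, ha'⟩ := hsep a ha
    obtain ⟨εb, hεb, hb'⟩ := hsep b hb
    refine ⟨dist a b / (εa * εb), ?_⟩
    rintro r ⟨u, hu, rfl⟩
    exact div_le_div_of_nonneg_left dist_nonneg (mul_pos hεa hεb)
      (mul_le_mul (ha' u hu) (hb' u hu) hεb.le dist_nonneg)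
  -- λ is nonnegative
  have hlam0 : ∀ a b, a ∈ U → b ∈ U → 0 ≤ lam U a b := by
    intro a b ha hb
    obtain ⟨u0, hu0⟩ := hbd
    have hmem : dist a b / (dist a u0 * dist b u0) ∈
        {r : ℝ | ∃ u ∈ frontier U, r = dist a b / (dist a u * dist b u)} := ⟨u0, hu0, rfl⟩
    exact le_trans (div_nonneg dist_nonneg (mul_nonneg dist_nonneg dist_nonneg))
      (le_csSup (hbdd a b ha hb) hmem)
  -- triangle inequality for λ via Ptolemy
  have htri : ∀ a b p, a ∈ U → b ∈ U → p ∈ U → lam U a b ≤ lam U a p + lam U b p := by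
    intro a b p ha hb hp
    refine csSup_le (hne a b) ?_
    rintro r ⟨u, hu, rfl⟩
    have hA := hpos a ha u hu
    have hB := hpos b hb u hu
    have hP := hpos p hp u hu
    have hstep : dist a b / (dist a u * dist b u) ≤
        dist a p / (dist a u * dist p u) + dist b p / (dist b u * dist p u) := by
      rw [div_add_div _ _ (by positivity) (by positivity), div_le_div_iff₀ (by positivity) (by positivity)]
      have hmul := mul_le_mul_of_nonneg_right (hPtol a b p u)
        (by positivity : (0:ℝ) ≤ dist a u * dist b u * dist p u)
      nlinarith [hmul]
    have t1 : dist a p / (dist a u * dist p u) ≤ lam U a p :=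
      le_csSup (hbdd a p ha hp) ⟨u, hu, rfl⟩
    have t2 : dist b p / (dist b u * dist p u) ≤ lam U b p :=
      le_csSup (hbdd b p hb hp) ⟨u, hu, rfl⟩
    linarith
  -- symmetry of λ
  have hsymm : ∀ a b : X, lam U a b = lam U b a := by
    intro a b
    unfold lam
    congr 1
    ext r
    constructor <;> rintro ⟨u, hu, rfl⟩ <;>
      exact ⟨u, hu, by rw [dist_comm a b, mul_comm]⟩
  set a := lam U x y
  set b := lam U z t
  set c := lam U x z
  set e := lam U y t
  set f := lam U x t
  set g := lam U y z
  have ha0 : 0 ≤ a := hlam0 x y hx hy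
  have hb0 : 0 ≤ b := hlam0 z t hz ht
  have hc0 : 0 ≤ c := hlam0 x z hx hz
  have he0 : 0 ≤ e := hlam0 y t hy ht
  have hf0 : 0 ≤ f := hlam0 x t hx ht
  have hg0 : 0 ≤ g := hlam0 y z hy hz
  have h1 : a ≤ c + g := htri x y z hx hy hz
  have h2 : a ≤ e + f := by
    have := htri x y t hx hy ht
    linarith [this]
  have h3 : b ≤ e + g := by
    have := htri z t y hz ht hy
    rw [hsymm z y, hsymm t y] at this
    linarith
  have h4 : b ≤ c + f := by
    have := htri z t x hz ht hx
    rw [hsymm z x, hsymm t x] at this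
    linarith
  set u := Real.sqrt ((1 + c) * (1 + e)) with hudef
  set v := Real.sqrt ((1 + f) * (1 + g)) with hvdef
  have hu0 : 0 ≤ u := Real.sqrt_nonneg _
  have hv0 : 0 ≤ v := Real.sqrt_nonneg _
  have hu : u ^ 2 = (1 + c) * (1 + e) := Real.sq_sqrt (by positivity)
  have hv : v ^ 2 = (1 + f) * (1 + g) := Real.sq_sqrt (by positivity)
  have hkey : (1 + a) * (1 + b) ≤ (u + v) ^ 2 :=
    key_ineq_aux a b c e f g u v ha0 hb0 hc0 he0 hf0 hg0 hu0 hv0 hu hv h1 h2 h3 h4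
  calc Real.sqrt ((1 + a) * (1 + b)) ≤ Real.sqrt ((u + v) ^ 2) := Real.sqrt_le_sqrt hkey
    _ = u + v := Real.sqrt_sq (by positivity)
end

section
/- Let p and q be two distinct points of the Euclidean plane ℝ² and let U = ℝ² \ {p,q}, so that ∂U = {p,q}, and define ρ_U(x,y) = max{log(1 + |x−y|/(|x−p|·|y−p|)), log(1 + |x−y|/(|x−q|·|y−q|))} for x,y ∈ U, where |·| denotes Euclidean distance. Then for every δ with 0 < δ < log 2 there exist points x, y, z, t ∈ U such that ρ_U(x,y) + ρ_U(z,t) > max{ρ_U(x,z) + ρ_U(y,t), ρ_U(x,t) + ρ_U(y,z)} + 2δ; that is, (U, ρ_U) is not Gromov hyperbolic with any parameter smaller than log 2. -/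
/-!
Put `x, y = p ± v` and `z, t = q ± v` with `‖v‖ = ε` small. Each of the pairs `{x, y}`, `{z, t}`
straddles a puncture, so its distance is at least `log (1 + 2 / ε)`, while each of the four cross
pairs has one point at distance `ε` from `p` and the other at distance `ε` from `q`, which caps its
distance at `log (1 + (d + 2ε) / (ε (d - ε)))` with `d = |p - q|`. As `ε → 0` the first argument
behaves like `2 / ε` and the second like `1 / ε`, so the difference of the two logarithms tends to
`log 2` and the four-point condition fails by nearly `2 log 2`.
-/

noncomputable def rhoPQ (p q x y : EuclideanSpace ℝ (Fin 2)) : ℝ :=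
  max (Real.log (1 + dist x y / (dist x p * dist y p)))
      (Real.log (1 + dist x y / (dist x q * dist y q)))

open Real Topology

section Euclidean

variable {p q x y v : EuclideanSpace ℝ (Fin 2)} {ε : ℝ}

lemma rhoPQ_comm (p q x y : EuclideanSpace ℝ (Fin 2)) : rhoPQ p q x y = rhoPQ q p x y :=
  max_comm _ _

lemma log_one_add_two_div_le_rhoPQ (hε : 0 < ε) (hv : ‖v‖ = ε) :
    log (1 + 2 / ε) ≤ rhoPQ p q (p + v) (p - v) := by
  have hxy : dist (p + v) (p - v) = 2 * ε := by
    rw [dist_eq_norm, add_sub_sub_cancel, ← two_smul ℝ v, norm_smul, Real.norm_two, hv]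
  have hratio : dist (p + v) (p - v) / (dist (p + v) p * dist (p - v) p) = 2 / ε := by
    rw [hxy, dist_self_add_left, dist_self_sub_left, hv]
    field_simp
  rw [rhoPQ, hratio]
  exact le_max_left _ _

lemma rhoPQ_le_of_dist_eq (hε : 0 < ε) (hεd : ε < dist p q)
    (hx : dist x p = ε) (hy : dist y q = ε) :
    rhoPQ p q x y ≤ log (1 + (dist p q + 2 * ε) / (ε * (dist p q - ε))) := by
  have hxy : dist x y ≤ dist p q + 2 * ε := by
    linarith [dist_triangle4 x p q y, dist_comm q y]
  have hyp : dist p q - ε ≤ dist y p := by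
    linarith [dist_triangle p y q, dist_comm p y, dist_comm y q]
  have hxq : dist p q - ε ≤ dist x q := by
    linarith [dist_triangle p x q, dist_comm p x]
  have hdε : 0 < dist p q - ε := by linarith
  refine max_le ?_ ?_
  · rw [hx]
    gcongr
  · rw [hy, mul_comm ε]
    gcongr

lemma mem_compl_pair_of_dist_eq (hε : 0 < ε) (hεd : ε < dist p q) (hx : dist x p = ε) :
    x ∈ ({p, q} : Set (EuclideanSpace ℝ (Fin 2)))ᶜ := by
  have hxq : dist p q - ε ≤ dist x q := by
    linarith [dist_triangle p x q, dist_comm p x]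
  simp only [Set.mem_compl_iff, Set.mem_insert_iff, Set.mem_singleton_iff, not_or]
  exact ⟨fun h => by simp [h] at hx; linarith, fun h => by simp [h] at hxq; linarith⟩

end Euclidean

lemma exists_log_add_lt_log {d δ : ℝ} (hd : 0 < d) (hδ : δ < log 2) :
    ∃ ε, 0 < ε ∧ ε < d ∧ log (1 + (d + 2 * ε) / (ε * (d - ε))) + δ < log (1 + 2 / ε) := by
  let g : ℝ → ℝ := fun ε => (ε + (d + 2 * ε) / (d - ε)) * exp δ - ε
  have hg0 : g 0 < 2 := by
    have : exp δ < 2 := by simpa [exp_log] using exp_lt_exp.mpr hδ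
    simpa [g, hd.ne'] using this
  have hg : ∀ᶠ ε in 𝓝 0, g ε < 2 :=
    ContinuousAt.eventually_lt (by fun_prop (disch := simp [hd.ne'])) continuousAt_const hg0
  have hsmall : ∀ᶠ ε in 𝓝 (0 : ℝ), ε < d := eventually_lt_nhds hd
  have hright : ∀ᶠ ε in 𝓝[>] 0, (g ε < 2 ∧ ε < d) ∧ 0 < ε :=
    ((hg.and hsmall).filter_mono nhdsWithin_le_nhds).and self_mem_nhdsWithin
  obtain ⟨ε, ⟨hgε, hεd⟩, hε⟩ := hright.exists
  have hdε : 0 < d - ε := by linarith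
  refine ⟨ε, hε, hεd, ?_⟩
  have key : (1 + (d + 2 * ε) / (ε * (d - ε))) * exp δ < 1 + 2 / ε := by
    have hscaled : (1 + (d + 2 * ε) / (ε * (d - ε))) * exp δ = (g ε + ε) / ε := by
      simp only [g]; field_simp; ring
    rw [hscaled, div_lt_iff₀ hε]
    field_simp
    linarith
  calc log (1 + (d + 2 * ε) / (ε * (d - ε))) + δ
      = log ((1 + (d + 2 * ε) / (ε * (d - ε))) * exp δ) := by
        rw [log_mul (by positivity) (exp_ne_zero δ), log_exp]
    _ < log (1 + 2 / ε) := log_lt_log (by positivity) key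

theorem stmt_8_general (p q : EuclideanSpace ℝ (Fin 2)) (hpq : p ≠ q)
    (U : Set (EuclideanSpace ℝ (Fin 2))) (hUdef : U = {p, q}ᶜ)
    (δ : ℝ) (hδ : δ < Real.log 2) :
    ∃ x ∈ U, ∃ y ∈ U, ∃ z ∈ U, ∃ t ∈ U,
      max (rhoPQ p q x z + rhoPQ p q y t) (rhoPQ p q x t + rhoPQ p q y z) + 2 * δ <
        rhoPQ p q x y + rhoPQ p q z t := by
  obtain ⟨ε, hε, hεd, hlog⟩ := exists_log_add_lt_log (dist_pos.mpr hpq) hδ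
  obtain ⟨v, hv⟩ := exists_norm_eq (EuclideanSpace ℝ (Fin 2)) hε.le
  have hεd' : ε < dist q p := dist_comm p q ▸ hεd
  have hxp : dist (p + v) p = ε := by rw [dist_self_add_left, hv]
  have hyp : dist (p - v) p = ε := by rw [dist_self_sub_left, hv]
  have hzq : dist (q + v) q = ε := by rw [dist_self_add_left, hv]
  have htq : dist (q - v) q = ε := by rw [dist_self_sub_left, hv]
  have hmem_q : ∀ w, dist w q = ε → w ∈ U := fun w hw => by
    rw [hUdef, Set.pair_comm]; exact mem_compl_pair_of_dist_eq hε hεd' hw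
  have hmem_p : ∀ w, dist w p = ε → w ∈ U := fun w hw => by
    rw [hUdef]; exact mem_compl_pair_of_dist_eq hε hεd hw
  refine ⟨p + v, hmem_p _ hxp, p - v, hmem_p _ hyp, q + v, hmem_q _ hzq, q - v, hmem_q _ htq, ?_⟩
  have hxy := log_one_add_two_div_le_rhoPQ (p := p) (q := q) hε hv
  have hzt := log_one_add_two_div_le_rhoPQ (p := q) (q := p) hε hv
  rw [rhoPQ_comm] at hzt
  have hxz := rhoPQ_le_of_dist_eq hε hεd hxp hzq
  have hyt := rhoPQ_le_of_dist_eq hε hεd hyp htq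
  have hxt := rhoPQ_le_of_dist_eq hε hεd hxp htq
  have hyz := rhoPQ_le_of_dist_eq hε hεd hyp hzq
  rw [← max_add_add_right]
  exact max_lt (by linarith) (by linarith)

theorem stmt_8 (p q : EuclideanSpace ℝ (Fin 2)) (hpq : p ≠ q)
    (U : Set (EuclideanSpace ℝ (Fin 2))) (hUdef : U = {p, q}ᶜ)
    (δ : ℝ) (hδ0 : 0 < δ) (hδ : δ < Real.log 2) :
    ∃ x ∈ U, ∃ y ∈ U, ∃ z ∈ U, ∃ t ∈ U,
      max (rhoPQ p q x z + rhoPQ p q y t) (rhoPQ p q x t + rhoPQ p q y z) + 2 * δ <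
        rhoPQ p q x y + rhoPQ p q z t :=
  stmt_8_general p q hpq U hUdef δ hδ
end

section
/- Let p and q be two distinct points of the Euclidean plane ℝ² and let U = ℝ² \ {p,q}, so that ∂U = {p,q}, and define ρ_U(x,y) = max{log(1 + |x−y|/(|x−p|·|y−p|)), log(1 + |x−y|/(|x−q|·|y−q|))} for x,y ∈ U, where |·| denotes Euclidean distance. Then for every ε > 1 there exist points x, y, z, t ∈ U such that exp((ε/2)ρ_U(x,y) + (ε/2)ρ_U(z,t)) > exp((ε/2)ρ_U(x,z) + (ε/2)ρ_U(y,t)) + exp((ε/2)ρ_U(x,t) + (ε/2)ρ_U(y,z)); that is, (U, ρ_U) is not strongly hyperbolic with any parameter larger than 1. -/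
/-!
Put `x, y` on the line `pq` at distance `s·|pq|` on either side of `q`, and `z, t` likewise
around `p`. For points `lineMap p q a`, `lineMap p q b` of that line the quotient
`|x - y| / (|x - p| |y - p|)` equals `|a⁻¹ - b⁻¹| / |pq|` (and symmetrically at `q`), so
`ρ(x, y), ρ(z, t) ≥ log (1 + 2 s⁻¹ / |pq|)` while the four cross distances are at most
`log (1 + (s⁻¹ + 2) / |pq|)`. As `s → 0` the two sides of the four-point inequality therefore
behave like `(2 / (s |pq|))^ε` and `2 (1 / (s |pq|))^ε`, and `2^ε > 2` because `ε > 1`.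
-/

open Real AffineMap

lemma dist_lineMap_div_dist_mul_dist {V P : Type*} [NormedAddCommGroup V] [NormedSpace ℝ V]
    [MetricSpace P] [NormedAddTorsor V P] {p q : P} (hpq : p ≠ q) {a b : ℝ}
    (ha : a ≠ 0) (hb : b ≠ 0) :
    dist (lineMap p q a) (lineMap p q b) / (dist (lineMap p q a) p * dist (lineMap p q b) p) =
      |a⁻¹ - b⁻¹| / dist p q := by
  have hL : dist p q ≠ 0 := dist_ne_zero.2 hpq
  rw [dist_lineMap_lineMap, dist_lineMap_left, dist_lineMap_left, Real.dist_eq,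
    Real.norm_eq_abs, Real.norm_eq_abs, inv_sub_inv ha hb, abs_div, abs_mul, abs_sub_comm]
  field_simp

lemma rhoPQ_lineMap {p q : EuclideanSpace ℝ (Fin 2)} (hpq : p ≠ q) {a b : ℝ}
    (ha₀ : a ≠ 0) (ha₁ : a ≠ 1) (hb₀ : b ≠ 0) (hb₁ : b ≠ 1) :
    rhoPQ p q (lineMap p q a) (lineMap p q b) =
      max (log (1 + |a⁻¹ - b⁻¹| / dist p q))
        (log (1 + |(1 - a)⁻¹ - (1 - b)⁻¹| / dist p q)) := by
  have hq := dist_lineMap_div_dist_mul_dist hpq.symm (a := 1 - a) (b := 1 - b)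
    (sub_ne_zero.2 ha₁.symm) (sub_ne_zero.2 hb₁.symm)
  rw [lineMap_apply_one_sub, lineMap_apply_one_sub, dist_comm q p] at hq
  rw [rhoPQ, dist_lineMap_div_dist_mul_dist hpq ha₀ hb₀, hq]

lemma abs_inv_sub_inv_le {a b s : ℝ} (ha : |a| = s) (hb : |b - 1| ≤ 1 / 2) :
    |a⁻¹ - b⁻¹| ≤ s⁻¹ + 2 := by
  have hb' : 1 / 2 ≤ |b| := by
    have := abs_sub_abs_le_abs_sub 1 b
    rw [abs_one, abs_sub_comm] at this
    linarith
  calc |a⁻¹ - b⁻¹| ≤ |a⁻¹| + |b⁻¹| := abs_sub _ _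
    _ ≤ s⁻¹ + 2 := by
      rw [abs_inv, abs_inv, ha]
      gcongr
      calc |b|⁻¹ ≤ (1 / 2)⁻¹ := inv_anti₀ (by norm_num) hb'
        _ = 2 := by norm_num

lemma rhoPQ_swap (p q x y : EuclideanSpace ℝ (Fin 2)) : rhoPQ q p x y = rhoPQ p q x y :=
  max_comm _ _

lemma rhoPQ_lineMap_le {p q : EuclideanSpace ℝ (Fin 2)} (hpq : p ≠ q) {a b s : ℝ}
    (hs₀ : 0 < s) (hs : s ≤ 1 / 2) (ha : |1 - a| = s) (hb : |b| = s) :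
    rhoPQ p q (lineMap p q a) (lineMap p q b) ≤ log (1 + (s⁻¹ + 2) / dist p q) := by
  have ha₀ : a ≠ 0 := by rintro rfl; norm_num at ha; linarith
  have ha₁ : a ≠ 1 := by rintro rfl; norm_num at ha; linarith
  have hb₀ : b ≠ 0 := by rintro rfl; norm_num at hb; linarith
  have hb₁ : b ≠ 1 := by rintro rfl; norm_num at hb; linarith
  have log_le {x : ℝ} (hx : |x| ≤ s⁻¹ + 2) :
      log (1 + |x| / dist p q) ≤ log (1 + (s⁻¹ + 2) / dist p q) :=
    log_le_log (by positivity) (by gcongr)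
  rw [rhoPQ_lineMap hpq ha₀ ha₁ hb₀ hb₁]
  refine max_le (log_le ?_) (log_le ?_)
  · rw [abs_sub_comm]
    exact abs_inv_sub_inv_le hb (by rw [abs_sub_comm, ha]; exact hs)
  · exact abs_inv_sub_inv_le ha (by rw [sub_sub_cancel_left, abs_neg, hb]; exact hs)

lemma log_le_rhoPQ_lineMap_neg {p q : EuclideanSpace ℝ (Fin 2)} (hpq : p ≠ q) {s : ℝ}
    (hs₀ : 0 < s) (hs₁ : s ≠ 1) :
    log (1 + 2 * s⁻¹ / dist p q) ≤ rhoPQ p q (lineMap p q (-s)) (lineMap p q s) := by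
  rw [rhoPQ_lineMap hpq (by linarith) (by linarith) hs₀.ne' hs₁]
  refine le_of_eq_of_le ?_ (le_max_left _ _)
  rw [inv_neg, ← neg_add', abs_neg, ← two_mul, abs_of_pos (by positivity)]

lemma log_le_rhoPQ_lineMap_one_add {p q : EuclideanSpace ℝ (Fin 2)} (hpq : p ≠ q) {s : ℝ}
    (hs₀ : 0 < s) (hs₁ : s ≠ 1) :
    log (1 + 2 * s⁻¹ / dist p q) ≤ rhoPQ p q (lineMap p q (1 + s)) (lineMap p q (1 - s)) := by
  have h := log_le_rhoPQ_lineMap_neg hpq.symm hs₀ hs₁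
  rwa [rhoPQ_swap, ← lineMap_apply_one_sub p q, ← lineMap_apply_one_sub p q s, sub_neg_eq_add,
    dist_comm] at h

lemma lineMap_mem_compl_pair {V P : Type*} [NormedAddCommGroup V] [NormedSpace ℝ V]
    [MetricSpace P] [NormedAddTorsor V P] {p q : P} (hpq : p ≠ q) {a : ℝ}
    (ha₀ : a ≠ 0) (ha₁ : a ≠ 1) : lineMap p q a ∈ ({p, q} : Set P)ᶜ := by
  simp [hpq, ha₀, ha₁]

lemma exists_log_two_add_mul_log_lt_mul_log {L ε : ℝ} (hL : 0 < L) (hε : 1 < ε) :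
    ∃ s, 0 < s ∧ s ≤ 1 / 2 ∧
      log 2 + ε * log (1 + (s⁻¹ + 2) / L) < ε * log (1 + 2 * s⁻¹ / L) := by
  set r := exp (log 2 / ε)
  have hr : r < 2 := by
    calc r < exp (log 2) := exp_lt_exp.2 (div_lt_self (log_pos one_lt_two) hε)
      _ = 2 := exp_log two_pos
  set K := ((r - 1) * L + 2 * r) / (2 - r)
  set u := max 2 (K + 1)
  have hu₂ : 2 ≤ u := le_max_left _ _
  have hu : (r - 1) * L + 2 * r < (2 - r) * u := by
    rw [← div_lt_iff₀' (by linarith)]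
    linarith [le_max_right 2 (K + 1)]
  refine ⟨u⁻¹, by positivity, by rw [one_div]; exact inv_anti₀ two_pos hu₂, ?_⟩
  rw [inv_inv]
  have hrC : r * (1 + (u + 2) / L) < 1 + 2 * u / L := by
    have h : 1 + 2 * u / L - r * (1 + (u + 2) / L) =
        ((2 - r) * u - ((r - 1) * L + 2 * r)) / L := by
      field_simp
      ring
    linarith [div_pos (sub_pos.2 hu) hL]
  have h := log_lt_log (by positivity) hrC
  rw [log_mul (exp_pos _).ne' (by positivity), log_exp] at h
  calc log 2 + ε * log (1 + (u + 2) / L) = ε * (log 2 / ε + log (1 + (u + 2) / L)) := by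
        field_simp
    _ < ε * log (1 + 2 * u / L) := mul_lt_mul_of_pos_left h (by linarith)

lemma exp_add_exp_lt_exp_of_bounds {ε lo hi a b c d e f : ℝ} (hε : 0 ≤ ε)
    (hkey : log 2 + ε * hi < ε * lo) (ha : a ≤ hi) (hb : b ≤ hi) (hc : c ≤ hi) (hd : d ≤ hi)
    (he : lo ≤ e) (hf : lo ≤ f) :
    exp (ε / 2 * a + ε / 2 * b) + exp (ε / 2 * c + ε / 2 * d) < exp (ε / 2 * e + ε / 2 * f) := by
  have bound {x y : ℝ} (hx : x ≤ hi) (hy : y ≤ hi) : exp (ε / 2 * x + ε / 2 * y) ≤ exp (ε * hi) :=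
    exp_le_exp.2 (by nlinarith)
  calc exp (ε / 2 * a + ε / 2 * b) + exp (ε / 2 * c + ε / 2 * d) ≤ 2 * exp (ε * hi) := by
        linarith [bound ha hb, bound hc hd]
    _ = exp (log 2 + ε * hi) := by rw [exp_add, exp_log two_pos]
    _ < exp (ε * lo) := exp_lt_exp.2 hkey
    _ ≤ exp (ε / 2 * e + ε / 2 * f) := exp_le_exp.2 (by nlinarith)

theorem stmt_9 (p q : EuclideanSpace ℝ (Fin 2)) (hpq : p ≠ q)
    (U : Set (EuclideanSpace ℝ (Fin 2))) (hUdef : U = {p, q}ᶜ)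
    (ε : ℝ) (hε : 1 < ε) :
    ∃ x ∈ U, ∃ y ∈ U, ∃ z ∈ U, ∃ t ∈ U,
      Real.exp ((ε / 2) * rhoPQ p q x z + (ε / 2) * rhoPQ p q y t) +
        Real.exp ((ε / 2) * rhoPQ p q x t + (ε / 2) * rhoPQ p q y z) <
      Real.exp ((ε / 2) * rhoPQ p q x y + (ε / 2) * rhoPQ p q z t) := by
  subst hUdef
  obtain ⟨s, hs₀, hs, hkey⟩ := exists_log_two_add_mul_log_lt_mul_log (dist_pos.2 hpq) hε
  have hs₁ : s ≠ 1 := by linarith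
  refine ⟨lineMap p q (1 + s), lineMap_mem_compl_pair hpq (by linarith) (by linarith),
    lineMap p q (1 - s), lineMap_mem_compl_pair hpq (by linarith) (by linarith),
    lineMap p q (-s), lineMap_mem_compl_pair hpq (by linarith) (by linarith),
    lineMap p q s, lineMap_mem_compl_pair hpq hs₀.ne' hs₁, ?_⟩
  refine exp_add_exp_lt_exp_of_bounds (by linarith) hkey
    (rhoPQ_lineMap_le hpq hs₀ hs ?_ ?_) (rhoPQ_lineMap_le hpq hs₀ hs ?_ ?_)
    (rhoPQ_lineMap_le hpq hs₀ hs ?_ ?_) (rhoPQ_lineMap_le hpq hs₀ hs ?_ ?_)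
    (log_le_rhoPQ_lineMap_one_add hpq hs₀ hs₁) (log_le_rhoPQ_lineMap_neg hpq hs₀ hs₁) <;>
    simp [hs₀.le]
end
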